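/- Let e and f be idempotents of S. If x ∈ eJe and y ∈ fJf lie in the same G̃-orbit, then there exists z ∈ (ef)J(ef) lying in the same G̃-orbit as x and y (note that ef = fe is again an idempotent of S). -/
import Mathlib


/-- `x, y ∈ J` lie in the same `G̃`-orbit: `y = t * a * x * b * t⁻¹` with `t ∈ H = S^×`
(both `t` and `t⁻¹` lie in `S`) and `a, b ∈ N = 1 + J`. -/
def SameOrbitJ {F A : Type*} [Field F] [Ring A] [Algebra F A]
    (J : Ideal A) (S : Subalgebra F A) (x y : A) : Prop :=
  ∃ t : Aˣ, (t : A) ∈ S ∧ ((t⁻¹ : Aˣ) : A) ∈ S ∧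
    ∃ a b : A, a - 1 ∈ J ∧ b - 1 ∈ J ∧
      y = (t : A) * a * x * b * ((t⁻¹ : Aˣ) : A)

/-- In any ring, an element congruent to `1` modulo the Jacobson radical is a unit. -/
lemma aux_isUnit_of_sub_one_mem_jacobson {A : Type*} [Ring A] {a : A}
    (h : a - 1 ∈ (⊥ : Ideal A).jacobson) : IsUnit a := by
  obtain ⟨s, hs⟩ := Ideal.exists_mul_sub_mem_of_sub_one_mem_jacobson a h
  rw [Ideal.mem_bot, sub_eq_zero] at hs
  have hs1 : s - 1 ∈ (⊥ : Ideal A).jacobson := by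
    have : s - 1 = s * (1 - a) + (s * a - 1) := by noncomm_ring
    rw [this]
    exact Ideal.add_mem _ (Ideal.mul_mem_left _ s (by
      have : (1 : A) - a = -(a - 1) := by noncomm_ring
      rw [this]; exact neg_mem h)) (by rw [hs, sub_self]; exact Ideal.zero_mem _)
  obtain ⟨u, hu⟩ := Ideal.exists_mul_sub_mem_of_sub_one_mem_jacobson s hs1
  rw [Ideal.mem_bot, sub_eq_zero] at hu
  have has : a * s = 1 := by
    calc a * s = 1 * (a * s) := by rw [one_mul]
    _ = (u * s) * (a * s) := by rw [hu]
    _ = u * ((s * a) * s) := by noncomm_ring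
    _ = u * s := by rw [hs, one_mul]
    _ = 1 := hu
  exact ⟨⟨a, s, has, hs⟩, rfl⟩

/-- Lemma 2.5 (1): if `x ∈ eJe` and `y ∈ fJf` lie in the same `G̃`-orbit, then `ef = fe` is
again an idempotent of `S` and there is `z ∈ (ef)J(ef)` in the same `G̃`-orbit as `x` and `y`. -/
theorem exists_mem_orbit_inter_corner
    {F A : Type*} [Field F] [Fintype F] [Ring A] [Algebra F A] [FiniteDimensional F A]
    (J : Ideal A) (hJ : J = (⊥ : Ideal A).jacobson)
    (hJr : ∀ x ∈ J, ∀ a : A, x * a ∈ J)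
    (hred : ∀ a b : A, a * b - b * a ∈ J)
    (S : Subalgebra F A)
    (hS : IsCompl (Subalgebra.toSubmodule S) (Submodule.restrictScalars F J))
    (e f : A) (he : IsIdempotentElem e) (heS : e ∈ S)
    (hf : IsIdempotentElem f) (hfS : f ∈ S)
    (x y : A) (hx : x ∈ J) (hex : e * x = x) (hxe : x * e = x)
    (hy : y ∈ J) (hfy : f * y = y) (hyf : y * f = y)
    (hxy : SameOrbitJ J S x y) :
    e * f = f * e ∧ IsIdempotentElem (e * f) ∧
      ∃ z : A, z ∈ J ∧ (e * f) * z = z ∧ z * (e * f) = z ∧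
        SameOrbitJ J S x z ∧ SameOrbitJ J S y z := by
  -- S is commutative
  have hcomm : ∀ s ∈ S, ∀ s' ∈ S, s * s' = s' * s := by
    intro s hs s' hs'
    have h1 : s * s' - s' * s ∈ J := hred s s'
    have h2 : s * s' - s' * s ∈ S := S.sub_mem (S.mul_mem hs hs') (S.mul_mem hs' hs)
    have h0 : s * s' - s' * s = 0 := by
      have := Submodule.disjoint_def.mp hS.disjoint (s * s' - s' * s)
        (by simpa using h2) (by simpa using h1)
      exact this
    exact sub_eq_zero.mp h0
  have hef : e * f = f * e := hcomm e heS f hfS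
  have hidem : IsIdempotentElem (e * f) := by
    show e * f * (e * f) = e * f
    calc e * f * (e * f) = e * (f * e) * f := by noncomm_ring
    _ = e * (e * f) * f := by rw [hef]
    _ = (e * e) * (f * f) := by noncomm_ring
    _ = e * f := by rw [he, hf]
  refine ⟨hef, hidem, ?_⟩
  obtain ⟨t, htS, htiS, a, b, ha, hb, hyeq⟩ := hxy
  have hte : (t : A) * e = e * (t : A) := hcomm _ htS _ heS
  have htie : ((t⁻¹ : Aˣ) : A) * e = e * ((t⁻¹ : Aˣ) : A) := hcomm _ htiS _ heS
  set ti : A := ((t⁻¹ : Aˣ) : A) with hti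
  set x' : A := (t : A) * x * ti with hx'def
  set a' : A := (t : A) * a * ti with ha'def
  set b' : A := (t : A) * b * ti with hb'def
  have htti : (t : A) * ti = 1 := t.mul_inv
  have htit : ti * (t : A) = 1 := t.inv_mul
  -- x' is an e-corner element
  have hex' : e * x' = x' := by
    rw [hx'def]
    calc e * ((t : A) * x * ti) = (e * (t : A)) * x * ti := by noncomm_ring
    _ = ((t : A) * e) * x * ti := by rw [hte]
    _ = (t : A) * (e * x) * ti := by noncomm_ring
    _ = (t : A) * x * ti := by rw [hex]
  have hx'e : x' * e = x' := by
    rw [hx'def]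
    calc (t : A) * x * ti * e = (t : A) * x * (ti * e) := by noncomm_ring
    _ = (t : A) * x * (e * ti) := by rw [htie]
    _ = (t : A) * (x * e) * ti := by noncomm_ring
    _ = (t : A) * x * ti := by rw [hxe]
  have ha' : a' - 1 ∈ J := by
    have : a' - 1 = (t : A) * (a - 1) * ti := by
      rw [ha'def]
      calc (t : A) * a * ti - 1 = (t : A) * a * ti - (t : A) * ti := by rw [htti]
      _ = (t : A) * (a - 1) * ti := by noncomm_ring
    rw [this]
    exact hJr _ (Ideal.mul_mem_left _ _ ha) _
  have hb' : b' - 1 ∈ J := by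
    have : b' - 1 = (t : A) * (b - 1) * ti := by
      rw [hb'def]
      calc (t : A) * b * ti - 1 = (t : A) * b * ti - (t : A) * ti := by rw [htti]
      _ = (t : A) * (b - 1) * ti := by noncomm_ring
    rw [this]
    exact hJr _ (Ideal.mul_mem_left _ _ hb) _
  have hy' : y = a' * x' * b' := by
    rw [hyeq, ha'def, hx'def, hb'def]
    calc (t : A) * a * x * b * ti
        = (t : A) * a * 1 * x * 1 * b * ti := by noncomm_ring
    _ = (t : A) * a * (ti * (t : A)) * x * (ti * (t : A)) * b * ti := by rw [htit]
    _ = ((t : A) * a * ti) * ((t : A) * x * ti) * ((t : A) * b * ti) := by noncomm_ring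
  set a₁ : A := e * a' * e + 1 - e with ha₁def
  set b₁ : A := e * b' * e + 1 - e with hb₁def
  have ha₁ : a₁ - 1 ∈ J := by
    have : a₁ - 1 = e * (a' - 1) * e := by
      rw [ha₁def]
      have : e * (a' - 1) * e = e * a' * e - e * e := by noncomm_ring
      rw [this, he]; noncomm_ring
    rw [this]
    exact hJr _ (Ideal.mul_mem_left _ _ ha') _
  have hb₁ : b₁ - 1 ∈ J := by
    have : b₁ - 1 = e * (b' - 1) * e := by
      rw [hb₁def]
      have : e * (b' - 1) * e = e * b' * e - e * e := by noncomm_ring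
      rw [this, he]; noncomm_ring
    rw [this]
    exact hJr _ (Ideal.mul_mem_left _ _ hb') _
  have key₁ : a₁ * x' = e * (a' * x') := by
    calc a₁ * x' = e * a' * (e * x') + x' - e * x' := by rw [ha₁def]; noncomm_ring
    _ = e * a' * x' + x' - x' := by rw [hex']
    _ = e * (a' * x') := by noncomm_ring
  have key₂ : x' * b₁ = (x' * b') * e := by
    calc x' * b₁ = (x' * e) * b' * e + x' - x' * e := by rw [hb₁def]; noncomm_ring
    _ = x' * b' * e + x' - x' := by rw [hx'e]
    _ = (x' * b') * e := by noncomm_ring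
  set z : A := e * y * e with hzdef
  have hz₁ : z = a₁ * x' * b₁ := by
    refine Eq.symm ?_
    calc a₁ * x' * b₁ = (a₁ * x') * b₁ := by noncomm_ring
    _ = e * (a' * x') * b₁ := by rw [key₁]
    _ = e * a' * (x' * b₁) := by noncomm_ring
    _ = e * a' * (x' * b' * e) := by rw [key₂]
    _ = e * (a' * x' * b') * e := by noncomm_ring
    _ = z := by rw [← hy', hzdef]
  -- z is in J and is an (ef)-corner element
  have hzJ : z ∈ J := hJr _ (Ideal.mul_mem_left _ _ hy) _
  have hgz : (e * f) * z = z := by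
    rw [hzdef]
    calc e * f * (e * y * e) = e * (f * e) * y * e := by noncomm_ring
    _ = e * (e * f) * y * e := by rw [hef]
    _ = (e * e) * (f * y) * e := by noncomm_ring
    _ = e * y * e := by rw [he, hfy]
  have hzg : z * (e * f) = z := by
    rw [hzdef]
    calc e * y * e * (e * f) = e * y * (e * e) * f := by noncomm_ring
    _ = e * (y * (e * f)) := by rw [he]; noncomm_ring
    _ = e * (y * (f * e)) := by rw [hef]
    _ = e * (y * f) * e := by noncomm_ring
    _ = e * y * e := by rw [hyf]
  -- x and z are in the same orbit, witnessed by t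
  have horbx : SameOrbitJ J S x z := by
    refine ⟨t, htS, htiS, ti * a₁ * (t : A), ti * b₁ * (t : A), ?_, ?_, ?_⟩
    · have : ti * a₁ * (t : A) - 1 = ti * (a₁ - 1) * (t : A) := by
        calc ti * a₁ * (t : A) - 1 = ti * a₁ * (t : A) - ti * (t : A) := by rw [htit]
        _ = ti * (a₁ - 1) * (t : A) := by noncomm_ring
      rw [this]
      exact hJr _ (Ideal.mul_mem_left _ _ ha₁) _
    · have : ti * b₁ * (t : A) - 1 = ti * (b₁ - 1) * (t : A) := by
        calc ti * b₁ * (t : A) - 1 = ti * b₁ * (t : A) - ti * (t : A) := by rw [htit]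
        _ = ti * (b₁ - 1) * (t : A) := by noncomm_ring
      rw [this]
      exact hJr _ (Ideal.mul_mem_left _ _ hb₁) _
    · rw [hz₁, hx'def]
      refine Eq.symm ?_
      calc (t : A) * (ti * a₁ * (t : A)) * x * (ti * b₁ * (t : A)) * ti
          = ((t : A) * ti) * a₁ * ((t : A) * x * ti) * b₁ * ((t : A) * ti) := by noncomm_ring
      _ = 1 * a₁ * ((t : A) * x * ti) * b₁ * 1 := by rw [htti]
      _ = a₁ * ((t : A) * x * ti) * b₁ := by noncomm_ring
  -- y and z are in the same orbit, witnessed by t = 1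
  have hua' : IsUnit a' := aux_isUnit_of_sub_one_mem_jacobson (hJ ▸ ha')
  have hub' : IsUnit b' := aux_isUnit_of_sub_one_mem_jacobson (hJ ▸ hb')
  obtain ⟨u, hu⟩ := hua'
  obtain ⟨v, hv⟩ := hub'
  have horby : SameOrbitJ J S y z := by
    refine ⟨1, S.one_mem, by simpa using S.one_mem, a₁ * ((u⁻¹ : Aˣ) : A),
      ((v⁻¹ : Aˣ) : A) * b₁, ?_, ?_, ?_⟩
    · have h1 : a₁ * ((u⁻¹ : Aˣ) : A) - 1 = (a₁ - a') * ((u⁻¹ : Aˣ) : A) := by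
        have h2 : a' * ((u⁻¹ : Aˣ) : A) = 1 := by rw [← hu]; exact u.mul_inv
        calc a₁ * ((u⁻¹ : Aˣ) : A) - 1 = a₁ * ((u⁻¹ : Aˣ) : A) - a' * ((u⁻¹ : Aˣ) : A) := by
              rw [h2]
        _ = (a₁ - a') * ((u⁻¹ : Aˣ) : A) := by noncomm_ring
      rw [h1]
      have : a₁ - a' = (a₁ - 1) - (a' - 1) := by noncomm_ring
      exact hJr _ (by rw [this]; exact Ideal.sub_mem _ ha₁ ha') _
    · have h1 : ((v⁻¹ : Aˣ) : A) * b₁ - 1 = ((v⁻¹ : Aˣ) : A) * (b₁ - b') := by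
        have h2 : ((v⁻¹ : Aˣ) : A) * b' = 1 := by rw [← hv]; exact v.inv_mul
        calc ((v⁻¹ : Aˣ) : A) * b₁ - 1
            = ((v⁻¹ : Aˣ) : A) * b₁ - ((v⁻¹ : Aˣ) : A) * b' := by rw [h2]
        _ = ((v⁻¹ : Aˣ) : A) * (b₁ - b') := by noncomm_ring
      rw [h1]
      have : b₁ - b' = (b₁ - 1) - (b' - 1) := by noncomm_ring
      exact Ideal.mul_mem_left _ _ (by rw [this]; exact Ideal.sub_mem _ hb₁ hb')
    · have hiu : ((u⁻¹ : Aˣ) : A) * a' = 1 := by rw [← hu]; exact u.inv_mul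
      have hiv : b' * ((v⁻¹ : Aˣ) : A) = 1 := by rw [← hv]; exact v.mul_inv
      have heq : (a₁ * ((u⁻¹ : Aˣ) : A)) * (a' * x' * b') * (((v⁻¹ : Aˣ) : A) * b₁)
          = a₁ * x' * b₁ := by
        calc (a₁ * ((u⁻¹ : Aˣ) : A)) * (a' * x' * b') * (((v⁻¹ : Aˣ) : A) * b₁)
            = a₁ * ((((u⁻¹ : Aˣ) : A) * a') * x' * (b' * ((v⁻¹ : Aˣ) : A))) * b₁ := by noncomm_ring
        _ = a₁ * (1 * x' * 1) * b₁ := by rw [hiu, hiv]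
        _ = a₁ * x' * b₁ := by noncomm_ring
      have : z = (a₁ * ((u⁻¹ : Aˣ) : A)) * y * (((v⁻¹ : Aˣ) : A) * b₁) := by
        rw [hy', hz₁, heq]
      rw [this]
      simp
  exact ⟨z, hzJ, hgz, hzg, horbx, horby⟩
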